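/- arXiv:2605.24898 — 3 statements merged into one kernel-verified Lean document; each statement's English description precedes it below -/
import Mathlib

section
/- Let n ≥ 1 and let ρ_1, …, ρ_n > 0, c_{v,1}, …, c_{v,n} > 0, r_1, …, r_n > 0 and T > 0 be real numbers. Set ρ = Σ_{i=1}^n ρ_i, c̄_v = (Σ_{i=1}^n ρ_i c_{v,i}) / ρ, and define the specific mixture entropy s = (1/ρ) Σ_{i=1}^n ρ_i (c_{v,i} ln T − r_i ln ρ_i). If s ≥ Z* for some Z* ∈ ℝ, then T ≥ exp( (Z* + (1/ρ) Σ_{i=1}^n ρ_i r_i ln ρ_i) / c̄_v ) > 0, and consequently the pressure p = Σ_{i=1}^n ρ_i r_i T is strictly positive. -/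
open Real Finset

/-! The specific entropy is affine in `ln T` with slope the mean heat capacity `c̄_v > 0`, so the
entropy bound `s ≥ Z*` inverts to a lower bound on `ln T`; exponentiating gives the bound on `T`. -/

theorem one_div_mul_sum_mul_log_sub {ι : Type*} [Fintype ι] (ρ cv r : ι → ℝ) (T ρtot : ℝ) :
    (1 / ρtot) * ∑ i, ρ i * (cv i * log T - r i * log (ρ i)) =
      (∑ i, ρ i * cv i) / ρtot * log T - (1 / ρtot) * ∑ i, ρ i * r i * log (ρ i) := by
  have hsum : ∑ i, ρ i * (cv i * log T - r i * log (ρ i)) =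
      (∑ i, ρ i * cv i) * log T - ∑ i, ρ i * r i * log (ρ i) := by
    rw [sum_mul, ← sum_sub_distrib]
    exact sum_congr rfl fun i _ => by ring
  rw [hsum]
  ring

theorem exp_div_le_of_le_mul_log_sub {c a Z T : ℝ} (hc : 0 < c) (hT : 0 < T)
    (h : Z ≤ c * log T - a) : exp ((Z + a) / c) ≤ T := by
  rw [← le_log_iff_exp_le hT, div_le_iff₀ hc]
  linarith

/-- Entropy lower bound implies temperature (and hence pressure) lower bound for an
ideal multicomponent gas: if the specific mixture entropy
`s = (1/ρ) Σ ρᵢ (c_{v,i} ln T − rᵢ ln ρᵢ)` satisfies `s ≥ Z*`, then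
`T ≥ exp((Z* + (1/ρ) Σ ρᵢ rᵢ ln ρᵢ)/c̄_v) > 0` and the pressure `p = Σ ρᵢ rᵢ T` is
strictly positive. -/
theorem stmt_1 {n : ℕ} (hn : 1 ≤ n)
    (ρ cv r : Fin n → ℝ) (T Zstar : ℝ)
    (hρ : ∀ i, 0 < ρ i) (hcv : ∀ i, 0 < cv i) (hr : ∀ i, 0 < r i) (hT : 0 < T)
    (ρtot cvbar s : ℝ)
    (hρtot : ρtot = ∑ i, ρ i)
    (hcvbar : cvbar = (∑ i, ρ i * cv i) / ρtot)
    (hs : s = (1 / ρtot) * ∑ i, ρ i * (cv i * Real.log T - r i * Real.log (ρ i)))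
    (hZ : Zstar ≤ s) :
    Real.exp ((Zstar + (1 / ρtot) * ∑ i, ρ i * r i * Real.log (ρ i)) / cvbar) ≤ T ∧
    0 < Real.exp ((Zstar + (1 / ρtot) * ∑ i, ρ i * r i * Real.log (ρ i)) / cvbar) ∧
    0 < ∑ i, ρ i * r i * T := by
  have : Nonempty (Fin n) := ⟨⟨0, hn⟩⟩
  have hρtot_pos : 0 < ρtot := hρtot ▸ sum_pos (fun i _ => hρ i) univ_nonempty
  have hcvbar_pos : 0 < cvbar :=
    hcvbar ▸ div_pos (sum_pos (fun i _ => mul_pos (hρ i) (hcv i)) univ_nonempty) hρtot_pos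
  have hs_affine : Zstar ≤ cvbar * log T - (1 / ρtot) * ∑ i, ρ i * r i * log (ρ i) := by
    rwa [hcvbar, ← one_div_mul_sum_mul_log_sub, ← hs]
  exact ⟨exp_div_le_of_le_mul_log_sub hcvbar_pos hT hs_affine, exp_pos _,
    sum_pos (fun i _ => mul_pos (mul_pos (hρ i) (hr i)) hT) univ_nonempty⟩
end

section
/- Let n ≥ 1, let c_{v,1}, …, c_{v,n} > 0 and r_1, …, r_n > 0 be fixed constants, set c_{p,i} = c_{v,i} + r_i, γ_i = c_{p,i}/c_{v,i} and γ_min = min_i γ_i, and let Z* ∈ ℝ. Then there exists a constant C > 0, depending only on n, (c_{v,i}), (r_i) and Z*, such that for all partial densities ρ_1, …, ρ_n > 0 and all temperatures T > 0 satisfying the entropy lower bound s := (1/ρ) Σ_{i=1}^n ρ_i (c_{v,i} ln T − r_i ln ρ_i) ≥ Z*, where ρ = Σ_{i=1}^n ρ_i, the total density and the pressure p = Σ_{i=1}^n ρ_i r_i T satisfy ρ^{γ_min} ≤ 1 + C p. -/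
/-!
Write `ρᵢ = ρ yᵢ` with mass fractions `yᵢ`. Since `yᵢ log yᵢ ≥ -1/e`, the entropy bound `s ≥ Z*` gives
`(∑ ρᵢ c_{v,i}) log T ≥ (∑ ρᵢ rᵢ) log ρ + (Z* - ∑ rᵢ / e) ρ`, and `ρ` is at most a multiple of
`∑ ρᵢ c_{v,i}`. As `rᵢ ≥ (γ_min - 1) c_{v,i}`, for `ρ ≥ 1` this yields
`T ≥ e^{-M} ρ^{γ_min - 1}` with `M` depending only on the data, so `ρ^{γ_min} ≤ e^M ρ T`,
and `ρ T` is at most a multiple of `p`. For `ρ ≤ 1` the bound is trivial.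
-/

open Real Finset

lemma Real.neg_exp_neg_one_le_mul_log {y : ℝ} (hy : 0 ≤ y) : -exp (-1) ≤ y * log y := by
  rcases hy.eq_or_lt with rfl | hy
  · simp [(exp_pos _).le]
  have key : -log y ≤ exp (-1) / y := by
    have := add_one_le_exp (-1 - log y)
    rw [exp_sub, exp_log hy] at this
    linarith
  have := mul_le_mul_of_nonneg_left key hy.le
  rw [mul_div_cancel₀ _ hy.ne'] at this
  linarith

lemma Real.neg_exp_neg_one_mul_le_mul_log_div {x s : ℝ} (hx : 0 ≤ x) (hs : 0 ≤ s) :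
    -exp (-1) * s ≤ x * log (x / s) := by
  rcases hs.eq_or_lt with rfl | hs
  · simp
  calc -exp (-1) * s ≤ x / s * log (x / s) * s :=
        mul_le_mul_of_nonneg_right (neg_exp_neg_one_le_mul_log (div_nonneg hx hs.le)) hs.le
    _ = x * log (x / s) := by field_simp

section

variable {ι : Type*} [Fintype ι]

lemma neg_exp_neg_one_mul_sum_mul_sum_le_sum_mul_log_div_sum (w ρ : ι → ℝ) (hw : ∀ i, 0 ≤ w i)
    (hρ : ∀ i, 0 ≤ ρ i) :
    -exp (-1) * (∑ i, w i) * ∑ i, ρ i ≤ ∑ i, w i * (ρ i * log (ρ i / ∑ j, ρ j)) := by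
  rw [mul_comm _ (∑ i, w i), mul_assoc, sum_mul]
  exact sum_le_sum fun i _ ↦ mul_le_mul_of_nonneg_left
    (neg_exp_neg_one_mul_le_mul_log_div (hρ i) (sum_nonneg fun j _ ↦ hρ j)) (hw i)

lemma mul_sum_le_sum_mul {a : ℝ} {f ρ : ι → ℝ} (hf : ∀ i, a ≤ f i) (hρ : ∀ i, 0 ≤ ρ i) :
    a * ∑ i, ρ i ≤ ∑ i, ρ i * f i := by
  rw [mul_sum]
  exact sum_le_sum fun i _ ↦ by rw [mul_comm]; exact mul_le_mul_of_nonneg_left (hf i) (hρ i)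

lemma sum_mul_entropy_le (cv r ρ : ι → ℝ) (T : ℝ) (hr : ∀ i, 0 ≤ r i) (hρ : ∀ i, 0 < ρ i) :
    ∑ i, ρ i * (cv i * log T - r i * log (ρ i)) ≤
      (∑ i, ρ i * cv i) * log T - (∑ i, ρ i * r i) * log (∑ i, ρ i)
        + exp (-1) * (∑ i, r i) * ∑ i, ρ i := by
  set S := ∑ i, ρ i
  have split : ∑ i, ρ i * (cv i * log T - r i * log (ρ i)) =
      (∑ i, ρ i * cv i) * log T - (∑ i, ρ i * r i) * log S
        - ∑ i, r i * (ρ i * log (ρ i / S)) := by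
    rw [sum_mul, sum_mul, ← sum_sub_distrib, ← sum_sub_distrib]
    refine sum_congr rfl fun i _ ↦ ?_
    have hS : 0 < S := (hρ i).trans_le (single_le_sum (fun j _ ↦ (hρ j).le) (mem_univ i))
    rw [log_div (hρ i).ne' hS.ne']
    ring
  have mixing := neg_exp_neg_one_mul_sum_mul_sum_le_sum_mul_log_div_sum r ρ hr fun i ↦ (hρ i).le
  rw [split]
  linarith

lemma log_temperature_ge (cv r ρ : ι → ℝ) {c γ Z T : ℝ} (hc : 0 < c) (hcv : ∀ i, c ≤ cv i)
    (hr : ∀ i, 0 ≤ r i) (hγr : ∀ i, (γ - 1) * cv i ≤ r i) (hρ : ∀ i, 0 < ρ i)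
    (hS : 1 ≤ ∑ i, ρ i)
    (hZ : Z * ∑ i, ρ i ≤ ∑ i, ρ i * (cv i * log T - r i * log (ρ i))) :
    (γ - 1) * log (∑ i, ρ i) - |Z - exp (-1) * ∑ i, r i| / c ≤ log T := by
  set S := ∑ i, ρ i
  set B := ∑ i, ρ i * cv i
  set R := ∑ i, ρ i * r i
  set K := exp (-1) * ∑ i, r i
  have hS₀ : 0 < S := zero_lt_one.trans_le hS
  have hB : c * S ≤ B := mul_sum_le_sum_mul hcv fun i ↦ (hρ i).le
  have hBpos : 0 < B := (mul_pos hc hS₀).trans_le hB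
  have hR : (γ - 1) * B ≤ R := by
    rw [mul_sum]
    refine sum_le_sum fun i _ ↦ ?_
    rw [mul_left_comm]
    exact mul_le_mul_of_nonneg_left (hγr i) (hρ i).le
  have entropy : Z * S ≤ B * log T - R * log S + K * S :=
    hZ.trans (sum_mul_entropy_le cv r ρ T hr hρ)
  have mixing : (γ - 1) * B * log S ≤ R * log S := mul_le_mul_of_nonneg_right hR (log_nonneg hS)
  have defect : -(|Z - K| / c * B) ≤ (Z - K) * S := by
    have : |Z - K| * S ≤ |Z - K| / c * B := by
      rw [div_mul_eq_mul_div, le_div_iff₀ hc, mul_assoc, mul_comm S]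
      exact mul_le_mul_of_nonneg_left hB (abs_nonneg _)
    linarith [mul_le_mul_of_nonneg_right (neg_abs_le (Z - K)) hS₀.le]
  refine le_of_mul_le_mul_left ?_ hBpos
  linarith

lemma rpow_sum_le_one_add_mul_pressure (cv r ρ : ι → ℝ) {c γ Z T : ℝ} (hc : 0 < c)
    (hcv : ∀ i, c ≤ cv i) (hγ : 0 < γ - 1) (hγr : ∀ i, (γ - 1) * cv i ≤ r i)
    (hρ : ∀ i, 0 < ρ i) (hT : 0 < T)
    (hZ : Z * ∑ i, ρ i ≤ ∑ i, ρ i * (cv i * log T - r i * log (ρ i))) :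
    (∑ i, ρ i) ^ γ ≤
      1 + exp (|Z - exp (-1) * ∑ i, r i| / c) / ((γ - 1) * c) * ∑ i, ρ i * r i * T := by
  have hr : ∀ i, 0 ≤ r i := fun i ↦ (mul_nonneg hγ.le (hc.le.trans (hcv i))).trans (hγr i)
  set S := ∑ i, ρ i
  set M := |Z - exp (-1) * ∑ i, r i| / c
  rcases le_or_gt S 1 with hS | hS
  · have hp : 0 ≤ ∑ i, ρ i * r i * T := sum_nonneg fun i _ ↦ by
      have := hρ i; have := hr i; positivity
    have := rpow_le_one (z := γ) (sum_nonneg fun i _ ↦ (hρ i).le) hS (by linarith)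
    have : 0 ≤ exp M / ((γ - 1) * c) * ∑ i, ρ i * r i * T := by positivity
    linarith
  have hSpos : 0 < S := zero_lt_one.trans hS
  have temperature : S ^ (γ - 1) ≤ exp M * T :=
    calc S ^ (γ - 1) = exp ((γ - 1) * log S) := by rw [rpow_def_of_pos hSpos, mul_comm]
      _ ≤ exp (M + log T) := exp_le_exp.2 <| by
          linarith [log_temperature_ge cv r ρ hc hcv hr hγr hρ hS.le hZ]
      _ = exp M * T := by rw [exp_add, exp_log hT]
  have pressure : (γ - 1) * c * S ≤ ∑ i, ρ i * r i :=
    mul_sum_le_sum_mul (fun i ↦ (mul_le_mul_of_nonneg_left (hcv i) hγ.le).trans (hγr i))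
      fun i ↦ (hρ i).le
  calc S ^ γ = S * S ^ (γ - 1) := by rw [rpow_sub_one hSpos.ne', mul_div_cancel₀ _ hSpos.ne']
    _ ≤ S * (exp M * T) := mul_le_mul_of_nonneg_left temperature hSpos.le
    _ = exp M / ((γ - 1) * c) * ((γ - 1) * c * S) * T := by field_simp
    _ ≤ exp M / ((γ - 1) * c) * (∑ i, ρ i * r i) * T := by gcongr
    _ = exp M / ((γ - 1) * c) * ∑ i, ρ i * r i * T := by rw [mul_assoc, sum_mul]
    _ ≤ _ := le_add_of_nonneg_left zero_le_one

end

theorem stmt_3_general {n : ℕ}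
    (cv r : Fin n → ℝ) (hcv : ∀ i, 0 < cv i) (hr : ∀ i, 0 < r i)
    (γmin : ℝ)
    (hγmin : IsLeast {x : ℝ | ∃ i : Fin n, x = (cv i + r i) / cv i} γmin)
    (Zstar : ℝ) :
    ∃ C : ℝ, 0 < C ∧ ∀ (ρ : Fin n → ℝ) (T : ℝ),
      (∀ i, 0 < ρ i) → 0 < T →
      Zstar ≤ (1 / ∑ i, ρ i) * ∑ i, ρ i * (cv i * Real.log T - r i * Real.log (ρ i)) →
      (∑ i, ρ i) ^ γmin ≤ 1 + C * ∑ i, ρ i * r i * T := by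
  obtain ⟨⟨i₀, hi₀⟩, hleast⟩ := hγmin
  have : Nonempty (Fin n) := ⟨i₀⟩
  obtain ⟨j, hj⟩ := Finite.exists_min cv
  have hγ : 0 < γmin - 1 := by
    rw [hi₀, add_div, div_self (hcv i₀).ne', add_sub_cancel_left]
    exact div_pos (hr i₀) (hcv i₀)
  have hγr : ∀ i, (γmin - 1) * cv i ≤ r i := fun i ↦ by
    have := (le_div_iff₀ (hcv i)).1 (hleast ⟨i, rfl⟩)
    linarith
  refine ⟨exp (|Zstar - exp (-1) * ∑ i, r i| / cv j) / ((γmin - 1) * cv j),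
    div_pos (exp_pos _) (mul_pos hγ (hcv j)), fun ρ T hρ hT hs ↦
    rpow_sum_le_one_add_mul_pressure cv r ρ (hcv j) hj hγ hγr hρ hT ?_⟩
  rwa [one_div_mul_eq_div, le_div_iff₀ (sum_pos (fun i _ ↦ hρ i) univ_nonempty)] at hs

/-- Pointwise density–pressure estimate: with `γᵢ = c_{p,i}/c_{v,i} = (c_{v,i}+rᵢ)/c_{v,i}`
and `γ_min = min_i γᵢ`, there is a constant `C > 0`, depending only on `n`, `(c_{v,i})`,
`(rᵢ)` and `Z*`, such that whenever the specific mixture entropy satisfies `s ≥ Z*`, the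
total density `ρ = Σ ρᵢ` and pressure `p = Σ ρᵢ rᵢ T` satisfy `ρ^{γ_min} ≤ 1 + C p`. -/
theorem stmt_3 {n : ℕ} (hn : 1 ≤ n)
    (cv r : Fin n → ℝ) (hcv : ∀ i, 0 < cv i) (hr : ∀ i, 0 < r i)
    (γmin : ℝ)
    (hγmin : IsLeast {x : ℝ | ∃ i : Fin n, x = (cv i + r i) / cv i} γmin)
    (Zstar : ℝ) :
    ∃ C : ℝ, 0 < C ∧ ∀ (ρ : Fin n → ℝ) (T : ℝ),
      (∀ i, 0 < ρ i) → 0 < T →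
      Zstar ≤ (1 / ∑ i, ρ i) * ∑ i, ρ i * (cv i * Real.log T - r i * Real.log (ρ i)) →
      (∑ i, ρ i) ^ γmin ≤ 1 + C * ∑ i, ρ i * r i * T :=
  stmt_3_general cv r hcv hr γmin hγmin Zstar
end

section
/- Let I be a finite nonempty index set, T > 0, and let ρ : [0,T] → (I → ℝ) be such that each component ρ_K is continuously differentiable. Let C : [0,T] → ℝ be nonnegative and integrable on [0,T]. Assume that for every t ∈ [0,T] and every index K* ∈ I achieving the minimum min_{J ∈ I} ρ_J(t), one has (d/dt) ρ_{K*}(t) ≥ − C(t) ρ_{K*}(t). If ρ_K(0) > 0 for all K ∈ I, then for all t ∈ [0,T] and all K ∈ I, ρ_K(t) ≥ (min_{J ∈ I} ρ_J(0)) · exp( − ∫_0^t C(τ) dτ ) > 0. -/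
/-
Let `m t = min_K ρ_K t`. At every time `m` has a right derivative equal to `ρ'_K t` for some
minimising index `K`, so the hypothesis gives `m' ≥ -C m`. As long as `m > 0`, integrating
`(log m)' ≥ -C` yields `m t ≥ m 0 · exp (-∫₀ᵗ C) ≥ m 0 · exp (-∫₀ᵀ C) > 0`; this uniform lower
bound prevents `m` from ever reaching `0`, by continuity at the first time it would.
-/

open Finset Set Filter Topology MeasureTheory

theorem exists_hasDerivWithinAt_Ioi_min {f g : ℝ → ℝ} {f' g' t : ℝ}
    (hf : HasDerivWithinAt f f' (Ioi t) t) (hg : HasDerivWithinAt g g' (Ioi t) t) :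
    (f t ≤ g t ∧ HasDerivWithinAt (fun x => min (f x) (g x)) f' (Ioi t) t) ∨
      (g t ≤ f t ∧ HasDerivWithinAt (fun x => min (f x) (g x)) g' (Ioi t) t) := by
  rcases lt_trichotomy (f t) (g t) with hlt | heq | hgt
  · refine .inl ⟨hlt.le, hf.congr_of_eventuallyEq ?_ (min_eq_left hlt.le)⟩
    exact (hf.continuousWithinAt.eventually_lt hg.continuousWithinAt hlt).mono
      fun x hx => min_eq_left hx.le
  · -- at a common value, the slope of the minimum is the minimum of the slopes
    have hmin : HasDerivWithinAt (fun x => min (f x) (g x)) (min f' g') (Ioi t) t := by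
      rw [hasDerivWithinAt_iff_tendsto_slope' self_notMem_Ioi] at hf hg ⊢
      refine (hf.min hg).congr' (eventually_nhdsWithin_of_forall fun x hx => ?_)
      simp only [slope_def_field, heq, min_self]
      rw [min_div_div_right (sub_nonneg.2 (le_of_lt hx)), min_sub_sub_right]
    rcases le_total f' g' with h | h
    · exact .inl ⟨heq.le, min_eq_left h ▸ hmin⟩
    · exact .inr ⟨heq.ge, min_eq_right h ▸ hmin⟩
  · refine .inr ⟨hgt.le, hg.congr_of_eventuallyEq ?_ (min_eq_right hgt.le)⟩
    exact (hg.continuousWithinAt.eventually_lt hf.continuousWithinAt hgt).mono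
      fun x hx => min_eq_right hx.le

theorem exists_hasDerivWithinAt_Ioi_finset_inf' {ι : Type*} {s : Finset ι} (hs : s.Nonempty)
    {f : ι → ℝ → ℝ} {f' : ι → ℝ} {t : ℝ}
    (hf : ∀ i ∈ s, HasDerivWithinAt (f i) (f' i) (Ioi t) t) :
    ∃ i ∈ s, (∀ j ∈ s, f i t ≤ f j t) ∧
      HasDerivWithinAt (fun x => s.inf' hs (f · x)) (f' i) (Ioi t) t := by
  induction hs using Finset.Nonempty.cons_induction with
  | singleton a =>
    exact ⟨a, mem_singleton_self a, by simp, by simpa using hf a (mem_singleton_self a)⟩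
  | cons a s ha hs ih =>
    obtain ⟨i, his, hi_min, hi_deriv⟩ := ih fun j hj => hf j (mem_cons_of_mem hj)
    have hi_eq : s.inf' hs (f · t) = f i t :=
      le_antisymm (inf'_le _ his) (le_inf' _ _ hi_min)
    simp only [inf'_cons hs]
    rcases exists_hasDerivWithinAt_Ioi_min (hf a (mem_cons_self a s)) hi_deriv with
      ⟨hle, hderiv⟩ | ⟨hle, hderiv⟩
    · refine ⟨a, mem_cons_self a s, ?_, hderiv⟩
      rw [hi_eq] at hle
      exact (forall_mem_cons _ _).2 ⟨le_rfl, fun j hj => hle.trans (hi_min j hj)⟩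
    · refine ⟨i, mem_cons_of_mem his, ?_, hderiv⟩
      rw [hi_eq] at hle
      exact (forall_mem_cons _ _).2 ⟨hle, hi_min⟩

theorem exists_hasDerivWithinAt_Ioi_inf'_ge {ι : Type*} [Fintype ι] [Nonempty ι]
    {ρ : ℝ → ι → ℝ} {ρ' : ι → ℝ} {c t : ℝ}
    (hρ : ∀ K, HasDerivWithinAt (ρ · K) (ρ' K) (Ioi t) t)
    (hmin : ∀ K, (∀ J, ρ t K ≤ ρ t J) → -c * ρ t K ≤ ρ' K) :
    ∃ d, HasDerivWithinAt (fun x => univ.inf' univ_nonempty (ρ x)) d (Ioi t) t ∧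
      -c * univ.inf' univ_nonempty (ρ t) ≤ d := by
  obtain ⟨K, -, hK_min, hK_deriv⟩ :=
    exists_hasDerivWithinAt_Ioi_finset_inf' univ_nonempty fun K _ => hρ K
  have hK : univ.inf' univ_nonempty (ρ t) = ρ t K :=
    le_antisymm (inf'_le _ (mem_univ K)) (le_inf' _ _ hK_min)
  exact ⟨ρ' K, hK_deriv, hK ▸ hmin K fun J => hK_min J (mem_univ J)⟩

theorem mul_exp_neg_integral_le_of_hasDerivWithinAt_Ioi {m m' C : ℝ → ℝ} {a b : ℝ} (hab : a ≤ b)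
    (hm : ContinuousOn m (Icc a b)) (hpos : ∀ t ∈ Icc a b, 0 < m t)
    (hm' : ∀ t ∈ Ioo a b, HasDerivWithinAt m (m' t) (Ioi t) t)
    (hC : ∀ t ∈ Ioo a b, -C t * m t ≤ m' t) (hCint : IntegrableOn C (Icc a b)) :
    m a * Real.exp (-∫ τ in a..b, C τ) ≤ m b := by
  have ha := hpos a (left_mem_Icc.2 hab)
  have hlog : -∫ τ in a..b, C τ ≤ Real.log (m b) - Real.log (m a) := by
    rw [← intervalIntegral.integral_neg]
    refine intervalIntegral.integral_le_sub_of_hasDeriv_right_of_le hab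
      (hm.log fun t ht => (hpos t ht).ne')
      (fun t ht => (hm' t ht).log (hpos t (Ioo_subset_Icc_self ht)).ne') hCint.neg fun t ht => ?_
    rw [le_div_iff₀ (hpos t (Ioo_subset_Icc_self ht))]
    exact hC t ht
  calc m a * Real.exp (-∫ τ in a..b, C τ)
      ≤ m a * Real.exp (Real.log (m b) - Real.log (m a)) := by gcongr
    _ = m b := by
      rw [Real.exp_sub, Real.exp_log ha, Real.exp_log (hpos b (right_mem_Icc.2 hab))]
      field_simp

theorem pos_of_forall_pos_imp_le {m : ℝ → ℝ} {a b c : ℝ} (hm : ContinuousOn m (Icc a b))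
    (ha : 0 < m a) (hc : 0 < c) (h : ∀ x ∈ Icc a b, (∀ y ∈ Icc a x, 0 < m y) → c ≤ m x) :
    ∀ x ∈ Icc a b, 0 < m x := by
  by_contra! ⟨x, hx, hmx⟩
  -- the first time at which `m` is not positive
  set Z := Icc a b ∩ m ⁻¹' Iic 0
  have hZ_bdd : BddBelow Z := ⟨a, fun z hz => hz.1.1⟩
  have hx₀ : sInf Z ∈ Z :=
    (hm.preimage_isClosed_of_isClosed isClosed_Icc isClosed_Iic).csInf_mem ⟨x, hx, hmx⟩ hZ_bdd
  set x₀ := sInf Z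
  have hpos : ∀ y ∈ Ico a x₀, 0 < m y := fun y hy => not_le.1 fun hy₀ =>
    (csInf_le hZ_bdd ⟨⟨hy.1, hy.2.le.trans hx₀.1.2⟩, hy₀⟩).not_gt hy.2
  have ha₀ : a < x₀ := hx₀.1.1.lt_of_ne fun hax => (hax ▸ ha).not_ge hx₀.2
  have hlim : Tendsto m (𝓝[<] x₀) (𝓝 (m x₀)) :=
    (hm x₀ hx₀.1).mono_of_mem_nhdsWithin (Icc_mem_nhdsLT_of_mem ⟨ha₀, hx₀.1.2⟩)
  have hc₀ : c ≤ m x₀ := ge_of_tendsto hlim <| mem_of_superset (Ioo_mem_nhdsLT ha₀) fun y hy =>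
    h y ⟨hy.1.le, hy.2.le.trans hx₀.1.2⟩ fun z hz => hpos z ⟨hz.1, hz.2.trans_lt hy.2⟩
  exact hx₀.2.not_gt (hc.trans_le hc₀)

theorem stmt_9_general {ι : Type*} [Fintype ι] [Nonempty ι]
    (T : ℝ)
    (ρ ρ' : ℝ → ι → ℝ) (C : ℝ → ℝ)
    (hderiv : ∀ K, ∀ t ∈ Set.Icc (0 : ℝ) T,
      HasDerivWithinAt (fun τ => ρ τ K) (ρ' t K) (Set.Icc (0 : ℝ) T) t)
    (hCpos : ∀ t ∈ Set.Icc (0 : ℝ) T, 0 ≤ C t)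
    (hCint : MeasureTheory.IntegrableOn C (Set.Icc (0 : ℝ) T))
    (hmin : ∀ t ∈ Set.Icc (0 : ℝ) T, ∀ Kstar : ι,
      (∀ J, ρ t Kstar ≤ ρ t J) → -C t * ρ t Kstar ≤ ρ' t Kstar)
    (h0 : ∀ K, 0 < ρ 0 K) :
    ∀ t ∈ Set.Icc (0 : ℝ) T, ∀ K,
      (Finset.univ.inf' Finset.univ_nonempty (ρ 0)) *
          Real.exp (-(∫ τ in (0 : ℝ)..t, C τ)) ≤ ρ t K ∧
      0 < (Finset.univ.inf' Finset.univ_nonempty (ρ 0)) *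
          Real.exp (-(∫ τ in (0 : ℝ)..t, C τ)) := by
  intro t ht K
  set m : ℝ → ℝ := fun t => univ.inf' univ_nonempty (ρ t)
  have hm_cont : ContinuousOn m (Icc 0 T) := fun s hs =>
    .finset_inf'_apply univ_nonempty fun K _ => (hderiv K s hs).continuousWithinAt
  have hm_deriv : ∀ s ∈ Ico 0 T, ∃ d, HasDerivWithinAt m d (Ioi s) s ∧ -C s * m s ≤ d :=
    fun s hs => exists_hasDerivWithinAt_Ioi_inf'_ge
      (fun K => (hderiv K s (Ico_subset_Icc_self hs)).mono_of_mem_nhdsWithin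
        (Icc_mem_nhdsGT_of_mem hs))
      (hmin s (Ico_subset_Icc_self hs))
  choose! m' hm' hm'_ge using hm_deriv
  have hm₀ : 0 < m 0 := (lt_inf'_iff _).2 fun K _ => h0 K
  have hbound : ∀ x ∈ Icc 0 T, (∀ y ∈ Icc 0 x, 0 < m y) →
      m 0 * Real.exp (-∫ τ in 0..x, C τ) ≤ m x := fun x hx hpos =>
    mul_exp_neg_integral_le_of_hasDerivWithinAt_Ioi hx.1
      (hm_cont.mono (Icc_subset_Icc_right hx.2)) hpos
      (fun y hy => hm' y ⟨hy.1.le, hy.2.trans_le hx.2⟩)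
      (fun y hy => hm'_ge y ⟨hy.1.le, hy.2.trans_le hx.2⟩)
      (hCint.mono_set (Icc_subset_Icc_right hx.2))
  have hint_mono : ∀ x ∈ Icc 0 T, ∫ τ in 0..x, C τ ≤ ∫ τ in 0..T, C τ := fun x hx =>
    intervalIntegral.integral_mono_interval le_rfl hx.1 hx.2
      (ae_restrict_of_forall_mem measurableSet_Ioc fun y hy => hCpos y (Ioc_subset_Icc_self hy))
      ((intervalIntegrable_iff_integrableOn_Icc_of_le (hx.1.trans hx.2)).2 hCint)
  have hpos := pos_of_forall_pos_imp_le hm_cont hm₀ (c := m 0 * Real.exp (-∫ τ in 0..T, C τ))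
    (by positivity) fun x hx hx_pos =>
      (hbound x hx hx_pos).trans' (by gcongr; exact hint_mono x hx)
  exact ⟨(hbound t ht fun y hy => hpos y ⟨hy.1, hy.2.trans ht.2⟩).trans (inf'_le _ (mem_univ K)),
    by positivity⟩

/-- Minimum principle and Grönwall argument for positivity of discrete densities:
if each component `ρ_K` is `C¹` on `[0,T]`, `C ≥ 0` is integrable, and at any time any
component achieving the minimum satisfies `ρ_{K*}'(t) ≥ −C(t) ρ_{K*}(t)`, then strictly
positive initial data stay bounded below by `(min_J ρ_J(0)) · exp(−∫_0^t C)` > 0. -/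
theorem stmt_9 {ι : Type*} [Fintype ι] [Nonempty ι]
    (T : ℝ) (hT : 0 < T)
    (ρ ρ' : ℝ → ι → ℝ) (C : ℝ → ℝ)
    (hderiv : ∀ K, ∀ t ∈ Set.Icc (0 : ℝ) T,
      HasDerivWithinAt (fun τ => ρ τ K) (ρ' t K) (Set.Icc (0 : ℝ) T) t)
    (hcont : ∀ K, ContinuousOn (fun t => ρ' t K) (Set.Icc (0 : ℝ) T))
    (hCpos : ∀ t ∈ Set.Icc (0 : ℝ) T, 0 ≤ C t)
    (hCint : MeasureTheory.IntegrableOn C (Set.Icc (0 : ℝ) T))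
    (hmin : ∀ t ∈ Set.Icc (0 : ℝ) T, ∀ Kstar : ι,
      (∀ J, ρ t Kstar ≤ ρ t J) → -C t * ρ t Kstar ≤ ρ' t Kstar)
    (h0 : ∀ K, 0 < ρ 0 K) :
    ∀ t ∈ Set.Icc (0 : ℝ) T, ∀ K,
      (Finset.univ.inf' Finset.univ_nonempty (ρ 0)) *
          Real.exp (-(∫ τ in (0 : ℝ)..t, C τ)) ≤ ρ t K ∧
      0 < (Finset.univ.inf' Finset.univ_nonempty (ρ 0)) *
          Real.exp (-(∫ τ in (0 : ℝ)..t, C τ)) :=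
  stmt_9_general T ρ ρ' C hderiv hCpos hCint hmin h0
end
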